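/- arXiv:math/0505627 — 2 statements merged into one kernel-verified Lean document; each statement's English description precedes it below -/
import Mathlib

section
/- Let f(x) = d·x (mod 1) with d ≥ 2 and B ⊂ S^1 finite with f|_B orientation preserving. Suppose H is a hole of B of length s with j/d < s < (j+1)/d for some j ∈ {1, …, d−1}. Let [c, c'] ⊂ H be a closed arc of length j/d and let q be the chord joining c and c' (a critical chord). Then ρ(e, q) = s − j/d, where e is the edge of CH(B) joining the two endpoints of H; moreover the critical value f(q) lies in the image-hole of H. -/
open MeasureTheory Set Metric Filter Topology

noncomputable section

abbrev S1 := AddCircle (1 : ℝ)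

def fd (d : ℕ) : S1 → S1 := fun x => d • x

def len (A : Set S1) : ℝ := (volume A).toReal

def IsHole (B H : Set S1) : Prop := ∃ x ∈ Bᶜ, H = connectedComponentIn Bᶜ x

def openArc (u w : S1) : Set S1 := {x | SBtw.sbtw u x w}

def OrientPresOn (g : S1 → S1) (B : Set S1) : Prop :=
  Set.InjOn g B ∧ ∀ a ∈ B, ∀ b ∈ B, ∀ c ∈ B, SBtw.sbtw a b c → SBtw.sbtw (g a) (g b) (g c)

def emb (x : S1) : ℂ := (AddCircle.toCircle x : ℂ)

def chord (a b : S1) : Set ℂ := segment ℝ (emb a) (emb b)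

def CH (A : Set S1) : Set ℂ := convexHull ℝ (emb '' A)

def Wandering (d N : ℕ) (T : Set S1) : Prop :=
  ∀ i j : ℕ, ((fd d)^[i] '' T).ncard = N ∧
    (i ≠ j → Disjoint (CH ((fd d)^[i] '' T)) (CH ((fd d)^[j] '' T)))

def IsHoleEnum (B : Set S1) {N : ℕ} (H : Fin N → Set S1) : Prop :=
  Function.Injective H ∧ (∀ k, IsHole B (H k)) ∧ (∀ G, IsHole B G → ∃ k, H k = G) ∧
  ∀ k l : Fin N, k ≤ l → len (H k) ≤ len (H l)

def rem (d : ℕ) (s : ℝ) : ℝ := s - (⌊(d : ℝ) * s⌋ : ℝ) / d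

def ImageHoleRel (g : S1 → S1) (H K : Set S1) : Prop :=
  ∃ u w : S1, u ≠ w ∧ H = openArc u w ∧ K = openArc (g u) (g w)

def InLimitSet (d : ℕ) (T : Set S1) (a b : S1) : Prop :=
  ∃ φ : ℕ → ℕ, StrictMono φ ∧ ∃ u v : ℕ → S1,
    (∀ n, u n ∈ (fd d)^[φ n] '' T ∧ v n ∈ (fd d)^[φ n] '' T) ∧
    Tendsto (fun n => hausdorffDist (chord (u n) (v n)) (chord a b)) atTop (nhds 0)

lemma coe_eq_coe_iff {x y : ℝ} : (x : S1) = (y : S1) ↔ ∃ k : ℤ, x - y = k := by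
  rw [QuotientAddGroup.eq_iff_sub_mem]
  constructor
  · rintro ⟨k, hk⟩; exact ⟨k, by simpa using hk.symm⟩
  · rintro ⟨k, hk⟩; exact ⟨k, by simpa using hk.symm⟩

lemma coe_toIcoMod (a y : ℝ) : ((toIcoMod one_pos a y : ℝ) : S1) = (y : S1) := by
  rw [coe_eq_coe_iff]
  exact ⟨-(toIcoDiv one_pos a y), by
    have := self_sub_toIcoMod one_pos a y
    push_cast; linarith [ (by simpa using this : y - toIcoMod one_pos a y = (toIcoDiv one_pos a y : ℝ)) ]⟩

lemma coe_toIocMod (a y : ℝ) : ((toIocMod one_pos a y : ℝ) : S1) = (y : S1) := by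
  rw [coe_eq_coe_iff]
  exact ⟨-(toIocDiv one_pos a y), by
    have := self_sub_toIocMod one_pos a y
    push_cast; linarith [ (by simpa using this : y - toIocMod one_pos a y = (toIocDiv one_pos a y : ℝ)) ]⟩

lemma openArc_coe (a t : ℝ) (ht0 : 0 < t) (ht1 : t < 1) :
    openArc (a : S1) ((a + t : ℝ) : S1) = QuotientAddGroup.mk '' Ioo a (a + t) := by
  ext z
  obtain ⟨y, rfl⟩ := QuotientAddGroup.mk_surjective z
  set m := toIcoMod one_pos a y with hm
  have hmIco : m ∈ Ico a (a + 1) := toIcoMod_mem_Ico one_pos a y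
  have hmy : ((m : ℝ) : S1) = (y : S1) := coe_toIcoMod a y
  have key : ((y:ℝ):S1) ∈ (QuotientAddGroup.mk '' Ioo a (a + t) : Set S1) ↔ m ∈ Ioo a (a + t) := by
    constructor
    · rintro ⟨z, hz, hzy⟩
      have hz' : toIcoMod one_pos a z = z := (toIcoMod_eq_self one_pos).2
        ⟨hz.1.le, by linarith [hz.2]⟩
      obtain ⟨k, hk⟩ := coe_eq_coe_iff.1 hzy
      have hmz : m = z := by
        rw [hm, show y = z + (-k) • (1:ℝ) by push_cast [zsmul_eq_mul]; linarith,
          toIcoMod_add_zsmul, hz']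
      rw [hmz]; exact hz
    · intro hmem; exact ⟨m, hmem, hmy⟩
  rw [show (↑y ∈ openArc (↑a : S1) ↑(a+t)) = SBtw.sbtw (↑a : S1) ↑y ↑(a+t) from rfl, key]
  rw [sbtw_iff_btw_not_btw, QuotientAddGroup.btw_coe_iff, QuotientAddGroup.btw_coe_iff]
  have e1 : toIocMod one_pos a (a + t) = a + t :=
    (toIocMod_eq_self one_pos).2 ⟨by linarith, by linarith⟩
  have e2 : toIocMod one_pos (a + t) a = a + 1 := by
    have : toIocMod one_pos (a + t) (a + 1) = a + 1 :=
      (toIocMod_eq_self one_pos).2 ⟨by linarith, by linarith⟩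
    calc toIocMod one_pos (a + t) a = toIocMod one_pos (a+t) (a + 1) := by
          rw [← toIocMod_add_right]
      _ = a + 1 := this
  have hicoeq : toIcoMod one_pos a y = m := rfl
  rw [hicoeq, e1, e2]
  by_cases hcase : m < a + t
  · have e3 : toIcoMod one_pos (a + t) y = m + 1 := by
      have : toIcoMod one_pos (a+t) (m + 1) = m + 1 :=
        (toIcoMod_eq_self one_pos).2 ⟨by linarith [hmIco.1], by linarith⟩
      calc toIcoMod one_pos (a + t) y = toIcoMod one_pos (a+t) m := by
            rw [hm, toIcoMod_toIcoMod]
        _ = toIcoMod one_pos (a+t) (m+1) := by rw [← toIcoMod_add_right]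
        _ = m + 1 := this
    rw [e3]
    constructor
    · rintro ⟨h1, h2⟩
      exact ⟨by push_neg at h2; linarith [hmIco.1, hmIco.2], hcase⟩
    · rintro ⟨h1, h2⟩
      exact ⟨by linarith, by intro h; linarith⟩
  · push_neg at hcase
    have e3 : toIcoMod one_pos (a + t) y = m := by
      have : toIcoMod one_pos (a+t) m = m :=
        (toIcoMod_eq_self one_pos).2 ⟨hcase, by linarith [hmIco.2]⟩
      calc toIcoMod one_pos (a + t) y = toIcoMod one_pos (a+t) m := by
            rw [hm, toIcoMod_toIcoMod]
        _ = m := this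
    rw [e3]
    constructor
    · rintro ⟨h1, h2⟩
      exact absurd (by linarith [hmIco.2] : m ≤ a + 1) h2
    · rintro ⟨h1, h2⟩; linarith

lemma len_openArc (a t : ℝ) (ht0 : 0 < t) (ht1 : t < 1) :
    len (openArc (a : S1) ((a + t : ℝ) : S1)) = t := by
  rw [openArc_coe a t ht0 ht1, len]
  have hopen : IsOpen (QuotientAddGroup.mk '' Ioo a (a + t) : Set S1) :=
    QuotientAddGroup.isOpenMap_coe _ isOpen_Ioo
  rw [AddCircle.add_projection_respects_measure 1 a hopen.measurableSet]
  have hset : (QuotientAddGroup.mk ⁻¹' (QuotientAddGroup.mk '' Ioo a (a + t) : Set S1))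
      ∩ Ioc a (a + 1) = Ioo a (a + t) := by
    ext x
    constructor
    · rintro ⟨⟨z, hz, hzx⟩, hx⟩
      obtain ⟨k, hk⟩ := coe_eq_coe_iff.1 hzx
      have h1 : (k : ℝ) < 1 := by linarith [hz.2, hx.1]
      have h2 : (-1 : ℝ) < (k : ℝ) := by linarith [hz.1, hx.2]
      have hk0 : k = 0 := by
        have h1' : k < 1 := by exact_mod_cast h1
        have h2' : (-1 : ℤ) < k := by exact_mod_cast h2
        omega
      have hzx' : z = x := by rw [hk0] at hk; push_cast at hk; linarith
      rw [← hzx']; exact hz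
    · intro hx
      exact ⟨⟨x, hx, rfl⟩, ⟨hx.1, by linarith [hx.2]⟩⟩
  rw [hset, Real.volume_Ioo, show a + t - a = t by ring, ENNReal.toReal_ofReal ht0.le]

lemma mem_openArc_of (a x t : ℝ) (hx0 : 0 < x) (hxt : x < t) (ht1 : t < 1) :
    ((a + x : ℝ) : S1) ∈ openArc (a : S1) ((a + t : ℝ) : S1) := by
  rw [openArc_coe a t (hx0.trans hxt) ht1]
  exact ⟨a + x, ⟨by linarith, by linarith⟩, rfl⟩

lemma exists_of_mem_openArc {a t : ℝ} {z : S1} (ht0 : 0 < t) (ht1 : t < 1)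
    (hz : z ∈ openArc (a : S1) ((a + t : ℝ) : S1)) :
    ∃ x : ℝ, 0 < x ∧ x < t ∧ z = ((a + x : ℝ) : S1) := by
  rw [openArc_coe a t ht0 ht1] at hz
  obtain ⟨y, hy, rfl⟩ := hz
  exact ⟨y - a, by linarith [hy.1], by linarith [hy.2], by norm_num⟩

lemma openArc_self (u : S1) : openArc u u = ∅ := by
  ext z; simp [openArc, sbtw_irrefl_left_right]

lemma fd_coe (d : ℕ) (r : ℝ) : fd d ((r : ℝ) : S1) = ((d * r : ℝ) : S1) := by
  show d • ((r:ℝ):S1) = _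
  rw [← AddCircle.coe_nsmul 1, nsmul_eq_mul]

/-- for a hole H = (u,w) of length s with j/d < s < (j+1)/d and a
closed subarc [c,c'] ⊆ H of length j/d, the critical chord q = (c,c') satisfies
ρ(e,q) = len(u,c)+len(c',w) = s - j/d, and the critical value f(c) lies in the
image-hole (f(u), f(w)). -/
theorem stmt10 (d j : ℕ) (hd : 2 ≤ d) (B : Set S1) (hBfin : B.Finite)
    (hop : OrientPresOn (fd d) B)
    (H : Set S1) (u w : S1) (hH : IsHole B H) (huw : H = openArc u w)
    (hu : u ∈ B) (hw : w ∈ B)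
    (s : ℝ) (hs : len H = s) (hj1 : 1 ≤ j) (hj2 : j ≤ d - 1)
    (hlow : (j : ℝ) / d < s) (hhigh : s < ((j : ℝ) + 1) / d)
    (c c' : S1) (hc' : c' = c + (((j : ℝ) / (d : ℝ)) : S1))
    (hcH : c ∈ H) (hc'H : c' ∈ H) (harc : openArc c c' ⊆ H) :
    len (openArc u c) + len (openArc c' w) = s - (j : ℝ) / d ∧
    fd d c ∈ openArc (fd d u) (fd d w) := by
  have hd0 : (0:ℝ) < d := by
    have : (0:ℕ) < d := by omega
    exact_mod_cast this
  have hj1d : (j:ℝ) + 1 ≤ d := by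
    have : j + 1 ≤ d := by omega
    exact_mod_cast this
  have hj0 : (0:ℝ) < j := by
    have : (0:ℕ) < j := by omega
    exact_mod_cast this
  have hjd0 : (0:ℝ) < (j:ℝ)/d := div_pos hj0 hd0
  have hjd1 : (j:ℝ)/d < 1 := by rw [div_lt_one hd0]; linarith
  have hs1 : s < 1 := lt_of_lt_of_le hhigh (by rw [div_le_one hd0]; linarith)
  have hs0 : 0 < s := hjd0.trans hlow
  obtain ⟨a, rfl⟩ := QuotientAddGroup.mk_surjective u
  obtain ⟨b, rfl⟩ := QuotientAddGroup.mk_surjective w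
  set t := toIocMod one_pos 0 (b - a) with htdef
  have ht_mem : t ∈ Set.Ioc (0:ℝ) 1 := by
    have := toIocMod_mem_Ioc one_pos 0 (b - a)
    rwa [zero_add] at this
  have hw' : ((a + t : ℝ) : S1) = (b : S1) := by
    have h1 : ((t : ℝ) : S1) = ((b - a : ℝ) : S1) := coe_toIocMod 0 (b - a)
    calc ((a + t : ℝ) : S1) = (a : S1) + ((t:ℝ) : S1) := rfl
      _ = (a : S1) + ((b - a : ℝ) : S1) := by rw [h1]
      _ = ((a + (b - a) : ℝ) : S1) := rfl
      _ = (b : S1) := by norm_num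
  have ht1 : t < 1 := by
    rcases lt_or_eq_of_le ht_mem.2 with h | h
    · exact h
    · exfalso
      have hba : (b : S1) = (a : S1) := by
        rw [← hw', h]
        rw [coe_eq_coe_iff]
        exact ⟨1, by push_cast; ring⟩
      rw [huw, hba, openArc_self] at hs
      simp [len] at hs
      exact absurd hs.symm (ne_of_gt hs0)
  have hH' : H = openArc ((a:ℝ) : S1) ((a + t : ℝ) : S1) := by rw [huw, hw']
  have hts : t = s := by rw [hH', len_openArc a t ht_mem.1 ht1] at hs; exact hs
  rw [hts] at hH' hw'
  obtain ⟨x, hx0, hxs, hc⟩ := exists_of_mem_openArc hs0 hs1 (hH' ▸ hcH)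
  have hc'' : c' = ((a + x + (j:ℝ)/d : ℝ) : S1) := by
    rw [hc', hc]
    rfl
  obtain ⟨x', hx'0, hx's, hcx'⟩ := exists_of_mem_openArc hs0 hs1 (hH' ▸ hc'H)
  obtain ⟨k, hk⟩ := coe_eq_coe_iff.1 (hc''.symm.trans hcx')
  have hkval : (a + x + (j:ℝ)/d) - (a + x') = (k:ℝ) := hk
  have hk0le : (0:ℤ) ≤ k := by
    have : (-1:ℝ) < (k:ℝ) := by rw [← hkval]; linarith
    have : (-1:ℤ) < k := by exact_mod_cast this
    omega
  have hkle1 : k ≤ 1 := by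
    have : (k:ℝ) < 2 := by rw [← hkval]; linarith
    have : k < (2:ℤ) := by exact_mod_cast this
    omega
  have hkey : x + (j:ℝ)/d < s := by
    rcases (by omega : k = 0 ∨ k = 1) with rfl | rfl
    · push_cast at hkval; linarith
    · exfalso
      -- then x > 1 - j/d and w ∈ openArc c c' ⊆ H, contradiction
      have hx_big : x > 1 - (j:ℝ)/d := by push_cast at hkval; linarith
      have hwmem : ((b:ℝ) : S1) ∈ openArc c c' := by
        rw [hc, hc'', ← hw']
        have harg : ((a + s : ℝ) : S1) = (((a + x) + (s - x) : ℝ) : S1) := by norm_num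
        have harg2 : ((a + x + (j:ℝ)/d : ℝ) : S1) = (((a + x) + (j:ℝ)/d : ℝ) : S1) := by norm_num
        rw [harg, harg2]
        exact mem_openArc_of (a + x) (s - x) ((j:ℝ)/d) (by linarith) (by linarith) hjd1
      have : ((b:ℝ) : S1) ∈ openArc ((a:ℝ):S1) ((b:ℝ):S1) := huw ▸ harc hwmem
      exact sbtw_irrefl_right (show SBtw.sbtw ((a:ℝ):S1) ((b:ℝ):S1) ((b:ℝ):S1) from this)
  constructor
  · have hlen1 : len (openArc ((a:ℝ):S1) c) = x := by
      rw [hc]; exact len_openArc a x hx0 (by linarith)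
    have hlen2 : len (openArc c' ((b:ℝ):S1)) = s - x - (j:ℝ)/d := by
      have harg : ((b:ℝ) : S1) = (((a + x + (j:ℝ)/d) + (s - x - (j:ℝ)/d) : ℝ) : S1) := by
        rw [← hw']; norm_num
      rw [hc'', harg]
      exact len_openArc _ _ (by linarith) (by linarith)
    rw [hlen1, hlen2]; ring
  · have hfu : fd d ((a:ℝ):S1) = ((d * a : ℝ) : S1) := fd_coe d a
    have hfc : fd d c = (((d:ℝ) * a + (d:ℝ) * x : ℝ) : S1) := by
      rw [hc, fd_coe]; norm_num
    have hfw : fd d ((b:ℝ):S1) = (((d:ℝ) * a + ((d:ℝ) * s - j) : ℝ) : S1) := by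
      rw [← hw', fd_coe, coe_eq_coe_iff]
      exact ⟨j, by push_cast; ring⟩
    rw [hfu, hfc, hfw]
    have harg : (((d:ℝ) * a + (d:ℝ) * x : ℝ) : S1) = (((d:ℝ) * a + (d:ℝ) * x : ℝ) : S1) := rfl
    have h1 : (0:ℝ) < (d:ℝ) * x := by positivity
    have h2 : (d:ℝ) * x < (d:ℝ) * s - j := by
      have h := (mul_lt_mul_iff_right₀ hd0).2 hkey
      have hexp : (d:ℝ) * (x + (j:ℝ)/d) = (d:ℝ) * x + j := by field_simp
      rw [hexp] at h; linarith
    have h3 : (d:ℝ) * s - j < 1 := by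
      have h := (mul_lt_mul_iff_right₀ hd0).2 hhigh
      have hexp : (d:ℝ) * (((j:ℝ) + 1)/d) = (j:ℝ) + 1 := by field_simp
      rw [hexp] at h; linarith
    exact mem_openArc_of ((d:ℝ)*a) ((d:ℝ)*x) ((d:ℝ)*s - j) h1 h2 h3
end
end

section
/- If T ⊂ S^1 forms a wandering N-gon under f(z) = z^d (d ≥ 2, N ≥ 3), then there exists at least one critical leaf, i.e., a critical chord that is the limit (in Hausdorff metric) of edges of a subsequence of the polygons CH(T_i). -/
open MeasureTheory Set Metric Filter Topology

noncomputable section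

/-!
Suppose there is no critical leaf. Then for some `η > 0`, from some time on, any two vertices
of a polygon `T_i` at circle distance at least `1/(2d)` have images at distance at least `η`:
otherwise far-apart pairs of vertices with ever closer images converge, by compactness, to a
critical chord of the limit set. Below `1/(2d)` the map `z ↦ z^d` multiplies circle distances
by `d`, so the distance between the orbits of two distinct vertices grows until it exceeds
`min η (1/(2d))` and never drops below it again. Eventually, then, every polygon has three
vertices pairwise bounded apart on the unit circle, so its area is bounded below; but the
polygons are pairwise disjoint in the unit disc.
-/

open Function

theorem AddCircle.norm_nsmul_eq_mul_norm {p : ℝ} (hp : p ≠ 0) {n : ℕ} {t : AddCircle p}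
    (h : n * ‖t‖ ≤ |p| / 2) : ‖n • t‖ = n * ‖t‖ := by
  induction t using QuotientAddGroup.induction_on with | H x => ?_
  set y := x - round (p⁻¹ * x) * p
  have hy : (y : AddCircle p) = x := by
    rw [AddCircle.coe_sub, sub_eq_self, AddCircle.coe_eq_zero_iff]
    exact ⟨round (p⁻¹ * x), zsmul_eq_mul _ _⟩
  have hny : ‖(x : AddCircle p)‖ = |y| := AddCircle.norm_eq p
  rw [hny] at h ⊢
  rw [← hy, ← AddCircle.coe_nsmul, nsmul_eq_mul, (AddCircle.norm_coe_eq_abs_iff p hp).2,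
    abs_mul, Nat.abs_cast]
  rwa [abs_mul, Nat.abs_cast]

section Expansion

variable {d : ℕ} {η : ℝ} {δ : ℕ → S1} {I : ℕ}

lemma min_le_norm_of_expanding (hd : 2 ≤ d) (hη : 0 ≤ η) (hδ : ∀ i, δ (i + 1) = d • δ i)
    (hexp : ∀ i ≥ I, 1 / (2 * d) ≤ ‖δ i‖ → η ≤ ‖δ (i + 1)‖) (j : ℕ) :
    min (min η (1 / (2 * d))) (2 ^ j * ‖δ I‖) ≤ ‖δ (I + j)‖ := by
  set ε := min η (1 / (2 * d))
  induction j with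
  | zero => simp
  | succ j ih =>
    rw [← add_assoc]
    by_cases hfar : 1 / (2 * d) ≤ ‖δ (I + j)‖
    · exact (min_le_left _ _).trans <| (min_le_left _ _).trans <| hexp _ le_self_add hfar
    have hnear : (d : ℝ) * ‖δ (I + j)‖ ≤ |(1 : ℝ)| / 2 := by
      calc (d : ℝ) * ‖δ (I + j)‖ ≤ d * (1 / (2 * d)) := by gcongr; exact (not_le.1 hfar).le
        _ = |(1 : ℝ)| / 2 := by field_simp; simp
    have hdouble : 2 * ‖δ (I + j)‖ ≤ ‖δ (I + j + 1)‖ := by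
      rw [hδ, AddCircle.norm_nsmul_eq_mul_norm one_ne_zero hnear]
      gcongr
      exact_mod_cast hd
    have hε : 0 ≤ ε := le_min hη (by positivity)
    calc min ε (2 ^ (j + 1) * ‖δ I‖) ≤ min (2 * ε) (2 * (2 ^ j * ‖δ I‖)) := by
          rw [pow_succ, mul_comm _ (2 : ℝ), mul_assoc]
          exact min_le_min_right _ (by linarith)
      _ = 2 * min ε (2 ^ j * ‖δ I‖) := (mul_min_of_nonneg _ _ zero_le_two).symm
      _ ≤ 2 * ‖δ (I + j)‖ := by gcongr
      _ ≤ ‖δ (I + j + 1)‖ := hdouble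

lemma eventually_le_norm_of_expanding (hd : 2 ≤ d) (hη : 0 ≤ η) (hδ : ∀ i, δ (i + 1) = d • δ i)
    (hI : δ I ≠ 0) (hexp : ∀ i ≥ I, 1 / (2 * d) ≤ ‖δ i‖ → η ≤ ‖δ (i + 1)‖) :
    ∀ᶠ i in atTop, min η (1 / (2 * d)) ≤ ‖δ i‖ := by
  obtain ⟨J, hJ⟩ := pow_unbounded_of_one_lt (min η (1 / (2 * d)) / ‖δ I‖) one_lt_two
  rw [div_lt_iff₀ (norm_pos_iff.2 hI)] at hJ
  filter_upwards [eventually_ge_atTop (I + J)] with i hi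
  obtain ⟨j, rfl⟩ := Nat.exists_eq_add_of_le (le_self_add.trans hi)
  refine le_trans (le_min le_rfl ?_) (min_le_norm_of_expanding hd hη hδ hexp j)
  calc min η (1 / (2 * d)) ≤ 2 ^ J * ‖δ I‖ := hJ.le
    _ ≤ 2 ^ j * ‖δ I‖ := by gcongr <;> [norm_num; omega]

end Expansion

lemma eventually_separated {d : ℕ} (hd : 2 ≤ d) {T : Set S1} (hT : T.Finite) {η : ℝ}
    (hη : 0 ≤ η)
    (h : ∀ᶠ i in atTop, ∀ x ∈ (fd d)^[i] '' T, ∀ y ∈ (fd d)^[i] '' T,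
      1 / (2 * d) ≤ ‖y - x‖ → η ≤ ‖fd d y - fd d x‖) :
    ∀ᶠ i in atTop, ∀ x ∈ (fd d)^[i] '' T, ∀ y ∈ (fd d)^[i] '' T,
      x ≠ y → min η (1 / (2 * d)) ≤ ‖y - x‖ := by
  obtain ⟨I, hI⟩ := eventually_atTop.1 h
  have hpair : ∀ p ∈ T ×ˢ T, ∀ᶠ i in atTop, (fd d)^[i] p.1 ≠ (fd d)^[i] p.2 →
      min η (1 / (2 * d)) ≤ ‖(fd d)^[i] p.2 - (fd d)^[i] p.1‖ := by
    rintro ⟨x, y⟩ ⟨hx, hy⟩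
    by_cases hxy : (fd d)^[I] x = (fd d)^[I] y
    · filter_upwards [eventually_ge_atTop I] with i hi hne
      obtain ⟨k, rfl⟩ := Nat.exists_eq_add_of_le hi
      rw [add_comm, iterate_add_apply, iterate_add_apply, hxy] at hne
      exact (hne rfl).elim
    · refine (eventually_le_norm_of_expanding hd hη
        (δ := fun i => (fd d)^[i] y - (fd d)^[i] x) (fun i => ?_) (sub_ne_zero.2 (Ne.symm hxy))
        fun i hi hfar => ?_).mono fun i hi _ => hi
      · simp only [iterate_succ_apply', fd, smul_sub]
      · simpa only [iterate_succ_apply'] using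
          hI i hi _ (mem_image_of_mem _ hx) _ (mem_image_of_mem _ hy) hfar
  filter_upwards [(eventually_all_finite (hT.prod hT)).2 hpair] with i hi
  rintro _ ⟨x, hx, rfl⟩ _ ⟨y, hy, rfl⟩ hne
  exact hi (x, y) ⟨hx, hy⟩ hne

lemma norm_emb (x : S1) : ‖emb x‖ = 1 := Circle.norm_coe _

lemma continuous_emb : Continuous emb :=
  continuous_subtype_val.comp AddCircle.continuous_toCircle

lemma emb_injective : Injective emb :=
  Subtype.val_injective.comp (AddCircle.injective_toCircle one_ne_zero)

lemma exists_pos_le_dist_emb {ε : ℝ} (hε : 0 < ε) :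
    ∃ c > 0, ∀ x y : S1, ε ≤ ‖x - y‖ → c ≤ dist (emb x) (emb y) := by
  have hK : IsCompact {p : S1 × S1 | ε ≤ ‖p.1 - p.2‖} :=
    (isClosed_le continuous_const (continuous_fst.sub continuous_snd).norm).isCompact
  obtain ⟨c, hc, hmin⟩ := hK.exists_forall_le'
    ((continuous_emb.comp continuous_fst).dist (continuous_emb.comp continuous_snd)).continuousOn
    (a := 0) fun p hp => dist_pos.2 <| emb_injective.ne <| sub_ne_zero.1 <|
      norm_pos_iff.1 (hε.trans_le hp)
  exact ⟨c, hc, fun x y hxy => hmin (x, y) hxy⟩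

lemma abs_im_conj_mul_of_norm_eq_one {A B C : ℂ} (hA : ‖A‖ = 1) (hB : ‖B‖ = 1) (hC : ‖C‖ = 1) :
    2 * |(starRingEnd ℂ (B - A) * (C - A)).im| = ‖B - A‖ * ‖C - A‖ * ‖B - C‖ := by
  have hconj {Z : ℂ} (hZ : ‖Z‖ = 1) : starRingEnd ℂ Z * Z = 1 := by
    rw [Complex.conj_mul', hZ]; norm_num
  set ζ := starRingEnd ℂ (B - A) * (C - A)
  -- `conj Z = Z⁻¹` on the unit circle, so clearing `A * B * C` makes `ζ - conj ζ` polynomial.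
  have hkey : (ζ - starRingEnd ℂ ζ) * (A * B * C) = (A - B) * (C - A) * (C - B) := by
    simp only [ζ, map_mul, map_sub, Complex.conj_conj]
    linear_combination ((C - A) * A * C) * hconj hB - ((C - A) * B * C) * hconj hA
      - ((B - A) * A * B) * hconj hC + ((B - A) * B * C) * hconj hA
  have hnorm := congrArg norm hkey
  rw [Complex.sub_conj, norm_mul, norm_mul, norm_mul, norm_mul, norm_mul, norm_mul, hA, hB, hC,
    Complex.norm_real, Complex.norm_I, Real.norm_eq_abs, abs_mul, abs_two, norm_sub_rev A B,
    norm_sub_rev C B] at hnorm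
  linarith

lemma ofReal_div_four_le_volume_convexHull (A B C : ℂ) :
    ENNReal.ofReal (|(starRingEnd ℂ (B - A) * (C - A)).im| / 4)
      ≤ volume (convexHull ℝ {A, B, C}) := by
  let L : ℂ →ₗ[ℝ] ℂ := Complex.basisOneI.constr ℝ ![B - A, C - A]
  have hL (z : ℂ) : L z = z.re • (B - A) + z.im • (C - A) := by
    simp [L, Complex.coe_basisOneI_repr, Fin.sum_univ_two]
  have hdet : LinearMap.det L = (starRingEnd ℂ (B - A) * (C - A)).im := by
    rw [← LinearMap.det_toMatrix Complex.basisOneI, Matrix.det_fin_two]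
    simp [LinearMap.toMatrix_apply, hL, Complex.coe_basisOneI_repr]
    ring
  let Q : Set ℂ := {z | z.re ∈ Icc (0 : ℝ) (1 / 2) ∧ z.im ∈ Icc (0 : ℝ) (1 / 2)}
  have hQ : volume Q = ENNReal.ofReal (1 / 4) := by
    have : Q = Complex.measurableEquivRealProd ⁻¹' (Icc 0 (1 / 2) ×ˢ Icc 0 (1 / 2)) := rfl
    rw [this, Complex.volume_preserving_equiv_real_prod.measure_preimage
      (measurableSet_Icc.prod measurableSet_Icc).nullMeasurableSet, Measure.volume_eq_prod,
      Measure.prod_prod, Real.volume_Icc, ← ENNReal.ofReal_mul (by norm_num)]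
    norm_num
  have hsub : (A + ·) '' (L '' Q) ⊆ convexHull ℝ {A, B, C} := by
    rintro _ ⟨_, ⟨z, ⟨⟨hre0, hre1⟩, ⟨him0, him1⟩⟩, rfl⟩, rfl⟩
    have hmem := (convex_convexHull ℝ ({A, B, C} : Set ℂ)).sum_mem (t := Finset.univ)
      (w := ![1 - z.re - z.im, z.re, z.im]) (z := ![A, B, C])
      (by intro i _; fin_cases i <;> simp <;> linarith) (by simp [Fin.sum_univ_three]; ring)
      (by intro i _; fin_cases i <;> apply subset_convexHull <;> simp)
    convert hmem using 1
    simp only [hL, Fin.sum_univ_three]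
    simp [Complex.real_smul]
    ring
  calc ENNReal.ofReal (|(starRingEnd ℂ (B - A) * (C - A)).im| / 4)
      = ENNReal.ofReal |LinearMap.det L| * volume Q := by
        rw [hQ, hdet, ← ENNReal.ofReal_mul (abs_nonneg _)]; ring_nf
    _ = volume ((A + ·) '' (L '' Q)) := by
        rw [image_add_left, measure_preimage_add, Measure.addHaar_image_linearMap]
    _ ≤ _ := measure_mono hsub

lemma CH_subset_closedBall (A : Set S1) : CH A ⊆ closedBall 0 1 :=
  convexHull_min (by rintro _ ⟨x, -, rfl⟩; simp [norm_emb]) (convex_closedBall 0 1)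

lemma measurableSet_CH {A : Set S1} (hA : A.Finite) : MeasurableSet (CH A) :=
  (hA.image emb).isCompact_convexHull (𝕜 := ℝ) |>.isClosed.measurableSet

lemma tendsto_volume_CH_atTop_zero {A : ℕ → Set S1} (hA : ∀ i, (A i).Finite)
    (hdisj : Pairwise (Disjoint on fun i => CH (A i))) :
    Tendsto (fun i => volume (CH (A i))) atTop (𝓝 0) := by
  refine ENNReal.tendsto_atTop_zero_of_tsum_ne_top ?_
  rw [← measure_iUnion hdisj fun i => measurableSet_CH (hA i)]
  exact ne_top_of_le_ne_top measure_closedBall_lt_top.ne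
    (measure_mono (iUnion_subset fun i => CH_subset_closedBall (A i)))

lemma exists_pos_le_volume_CH {ε : ℝ} (hε : 0 < ε) :
    ∃ v : ENNReal, v ≠ 0 ∧ ∀ A : Set S1, 2 < A.ncard →
      (∀ x ∈ A, ∀ y ∈ A, x ≠ y → ε ≤ ‖y - x‖) → v ≤ volume (CH A) := by
  obtain ⟨c, hc, hdist⟩ := exists_pos_le_dist_emb hε
  refine ⟨ENNReal.ofReal (c ^ 3 / 8), by positivity, fun A hA hsep => ?_⟩
  obtain ⟨a, ha, b, hb, c', hc', hab, hac, hbc⟩ := (two_lt_ncard (finite_of_ncard_pos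
    (by omega))).1 hA
  have hchord {x y : S1} (hx : x ∈ A) (hy : y ∈ A) (hxy : x ≠ y) : c ≤ ‖emb y - emb x‖ := by
    simpa only [dist_eq_norm] using hdist y x (hsep x hx y hy hxy)
  have hcube : c ^ 3 ≤ ‖emb b - emb a‖ * ‖emb c' - emb a‖ * ‖emb b - emb c'‖ := by
    rw [pow_three, ← mul_assoc]
    gcongr
    exacts [hchord ha hb hab, hchord ha hc' hac, hchord hc' hb hbc.symm]
  calc ENNReal.ofReal (c ^ 3 / 8)
      ≤ ENNReal.ofReal (|(starRingEnd ℂ (emb b - emb a) * (emb c' - emb a)).im| / 4) := by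
        refine ENNReal.ofReal_le_ofReal ?_
        linarith [abs_im_conj_mul_of_norm_eq_one (norm_emb a) (norm_emb b) (norm_emb c')]
    _ ≤ volume (convexHull ℝ {emb a, emb b, emb c'}) := ofReal_div_four_le_volume_convexHull _ _ _
    _ ≤ volume (CH A) := by
        refine measure_mono (convexHull_mono ?_)
        simp only [insert_subset_iff, singleton_subset_iff]
        exact ⟨mem_image_of_mem _ ha, mem_image_of_mem _ hb, mem_image_of_mem _ hc'⟩

section Segment

variable {E : Type*} [NormedAddCommGroup E] [NormedSpace ℝ E]

lemma exists_dist_le_of_mem_segment {p q z : E} (p' q' : E) (hz : z ∈ segment ℝ p q) :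
    ∃ z' ∈ segment ℝ p' q', dist z z' ≤ max (dist p p') (dist q q') := by
  obtain ⟨s, t, hs, ht, hst, rfl⟩ := hz
  refine ⟨s • p' + t • q', ⟨s, t, hs, ht, hst, rfl⟩, ?_⟩
  calc dist (s • p + t • q) (s • p' + t • q')
      ≤ dist (s • p) (s • p') + dist (t • q) (t • q') := dist_add_add_le _ _ _ _
    _ = s * dist p p' + t * dist q q' := by
        rw [dist_smul₀, dist_smul₀, Real.norm_of_nonneg hs, Real.norm_of_nonneg ht]
    _ ≤ s * max (dist p p') (dist q q') + t * max (dist p p') (dist q q') := by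
        gcongr
        exacts [le_max_left _ _, le_max_right _ _]
    _ = max (dist p p') (dist q q') := by rw [← add_mul, hst, one_mul]

lemma hausdorffDist_segment_le (p q p' q' : E) :
    hausdorffDist (segment ℝ p q) (segment ℝ p' q') ≤ max (dist p p') (dist q q') := by
  refine hausdorffDist_le_of_mem_dist (le_max_of_le_left dist_nonneg)
    (fun z hz => exists_dist_le_of_mem_segment p' q' hz) fun z hz => ?_
  simpa only [dist_comm p, dist_comm q] using exists_dist_le_of_mem_segment p q hz

end Segment

lemma exists_critical_leaf_of_frequently {d : ℕ} {T : Set S1} {r : ℝ} (hr : 0 < r)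
    (h : ∀ n : ℕ, ∃ᶠ i in atTop, ∃ x ∈ (fd d)^[i] '' T, ∃ y ∈ (fd d)^[i] '' T,
      r ≤ ‖y - x‖ ∧ ‖fd d y - fd d x‖ < 1 / (n + 1)) :
    ∃ a b : S1, a ≠ b ∧ fd d a = fd d b ∧ InLimitSet d T a b := by
  obtain ⟨φ, hφ, hpairs⟩ := extraction_forall_of_frequently h
  choose u hu v hv hfar hnear using hpairs
  obtain ⟨⟨a, b⟩, -, ψ, hψ, hlim⟩ :=
    isCompact_univ.tendsto_subseq (x := fun n => (u n, v n)) fun n => mem_univ _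
  have hua : Tendsto (u ∘ ψ) atTop (𝓝 a) := (continuous_fst.tendsto _).comp hlim
  have hvb : Tendsto (v ∘ ψ) atTop (𝓝 b) := (continuous_snd.tendsto _).comp hlim
  have hfd : Continuous (fd d) := continuous_id.nsmul d
  refine ⟨a, b, ?_, ?_, φ ∘ ψ, hφ.comp hψ, u ∘ ψ, v ∘ ψ, fun n => ⟨hu _, hv _⟩, ?_⟩
  · have hrba : r ≤ ‖b - a‖ := ge_of_tendsto (hvb.sub hua).norm (.of_forall fun n => hfar _)
    rintro rfl
    rw [sub_self, norm_zero] at hrba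
    exact hr.not_ge hrba
  · have hlim' := (((hfd.tendsto b).comp hvb).sub ((hfd.tendsto a).comp hua)).norm
    have hzero : Tendsto (fun n => ‖fd d (v (ψ n)) - fd d (u (ψ n))‖) atTop (𝓝 0) :=
      squeeze_zero (fun _ => norm_nonneg _) (fun n => (hnear (ψ n)).le)
        (tendsto_one_div_add_atTop_nhds_zero_nat.comp hψ.tendsto_atTop)
    exact (sub_eq_zero.1 (norm_eq_zero.1 (tendsto_nhds_unique hlim' hzero))).symm
  · refine squeeze_zero (fun _ => hausdorffDist_nonneg)
      (fun n => hausdorffDist_segment_le _ _ _ _) ?_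
    simpa using (((continuous_emb.tendsto a).comp hua).dist (tendsto_const_nhds (x := emb a))).max
      (((continuous_emb.tendsto b).comp hvb).dist (tendsto_const_nhds (x := emb b)))

/-- a wandering N-gon has a critical leaf: a critical chord which is
a Hausdorff limit of chords from a subsequence of the polygons CH(T_i). -/
theorem stmt11 (d N : ℕ) (hd : 2 ≤ d) (hN : 3 ≤ N) (T : Set S1)
    (hw : Wandering d N T) :
    ∃ a b : S1, a ≠ b ∧ fd d a = fd d b ∧ InLimitSet d T a b := by
  by_contra hleaf
  have hcard (i : ℕ) : 2 < ((fd d)^[i] '' T).ncard := by rw [(hw i i).1]; omega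
  have hfin (i : ℕ) : ((fd d)^[i] '' T).Finite := finite_of_ncard_pos ((hcard i).trans' two_pos)
  obtain ⟨n, hn⟩ : ∃ n : ℕ, ∀ᶠ i in atTop, ∀ x ∈ (fd d)^[i] '' T, ∀ y ∈ (fd d)^[i] '' T,
      1 / (2 * d) ≤ ‖y - x‖ → 1 / (n + 1) ≤ ‖fd d y - fd d x‖ := by
    by_contra! hfreq
    exact hleaf (exists_critical_leaf_of_frequently (by positivity) hfreq)
  obtain ⟨v, hv, hvol⟩ := exists_pos_le_volume_CH (ε := min (1 / (n + 1)) (1 / (2 * d)))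
    (by positivity)
  have hsep := eventually_separated hd (by simpa using hfin 0) (by positivity) hn
  have hsmall := tendsto_volume_CH_atTop_zero hfin fun i j hij => (hw i j).2 hij
  obtain ⟨i, hlt, hle⟩ := (((tendsto_order.1 hsmall).2 v hv.bot_lt).and
    (hsep.mono fun i hi => hvol _ (hcard i) hi)).exists
  exact hlt.not_ge hle
end
end
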